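/- Let γ ≥ 1, μ > 0, v₊ > 2, and for small ε > 0 let v̄_ε be the soft-congestion traveling-wave profile normalized by v̄_ε(0) = 1 + ε^{1/(γ+1)}, and let v̄ be the limit profile with speed s = 1/sqrt(v₊ − 1). Then there exist constants C > 0 and ε₀ > 0 such that for all 0 < ε < ε₀, sup_{x ≥ 0} |v̄_ε(x) − v̄(x)| ≤ C ε^{1/(γ+1)}; i.e. in the free zone the error between the approximate and limit profiles is of order ε^{1/(γ+1)}. -/

import Mathlib

/-!
For `x ≥ 0` the profile stays above `v̄_ε(0) = 1 + η`, `η = ε^{1/(γ+1)}`, where the pressure is at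
most `ε η^{-γ} = η`. Hence `s_ε² (v₊ - η / s_ε² - v) ≤ Φ_ε(v) ≤ s_ε² (v₊ - v)`, and comparison with
the logistic equation `w' = (s_ε/μ) w (m - w)` traps `v̄_ε` between the logistic curves started at
`1 + η` with capacities `v₊ - η / s_ε²` and `v₊`. The limit profile is the logistic curve with
capacity `v₊`, rate `s/μ` and initial value `1`. A logistic curve is Lipschitz in its three
parameters uniformly in `x ≥ 0`, and `s_ε = s + O(η)`, so both bounds are within `O(η)` of `v̄`.
-/

open Set Filter Topology Real

theorem le_mul_exp_of_deriv_le {f f' : ℝ → ℝ} {K a b : ℝ} (hab : a ≤ b)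
    (hf : ∀ t ∈ Icc a b, HasDerivAt f (f' t) t) (bound : ∀ t ∈ Ico a b, f' t ≤ K * f t) :
    f b ≤ f a * exp (K * (b - a)) := by
  rw [← gronwallBound_ε0]
  exact le_gronwallBound_of_liminf_deriv_right_le
    (fun t ht => (hf t ht).continuousAt.continuousWithinAt)
    (fun t ht _ hr => (hf t (Ico_subset_Icc_self ht)).hasDerivWithinAt.liminf_right_slope_le hr)
    le_rfl (fun t ht => by rw [add_zero]; exact bound t ht) b (right_mem_Icc.2 hab)

theorem mul_exp_le_of_le_deriv {f f' : ℝ → ℝ} {K a b : ℝ} (hab : a ≤ b)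
    (hf : ∀ t ∈ Icc a b, HasDerivAt f (f' t) t) (bound : ∀ t ∈ Ico a b, K * f t ≤ f' t) :
    f a * exp (K * (b - a)) ≤ f b := by
  have := le_mul_exp_of_deriv_le (f := -f) hab (fun t ht => (hf t ht).neg)
    fun t ht => by simpa using bound t ht
  simpa using this

/-- The solution of `w' = c w (m - w)`, `w 0 = w₀`. -/
noncomputable def logistic (m c w₀ x : ℝ) : ℝ :=
  m / (1 + (m / w₀ - 1) * exp (-(c * m * x)))

theorem logistic_zero {m c w₀ : ℝ} (hm : m ≠ 0) : logistic m c w₀ 0 = w₀ := by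
  rw [logistic, mul_zero, neg_zero, exp_zero, mul_one, add_sub_cancel, div_div_cancel₀ hm]

section LogisticComparison

/-! Both comparisons go through `q = m / w - 1`, which turns the logistic inequality into the
linear one `q' ≥ -c m q` (resp. `≤`). -/

variable {w w' : ℝ → ℝ} {m c x : ℝ}

theorem hasDerivAt_div_sub_one {t : ℝ} (hw : HasDerivAt w (w' t) t) (ht : w t ≠ 0) :
    HasDerivAt (fun t => m / w t - 1) (m * (-w' t / w t ^ 2)) t :=
  ((hw.inv ht).const_mul m).sub_const 1

theorem le_logistic_of_deriv_le (hx : 0 ≤ x) (hm : 0 < m)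
    (hw : ∀ t ∈ Icc 0 x, HasDerivAt w (w' t) t) (hpos : ∀ t ∈ Icc 0 x, 0 < w t)
    (h0 : w 0 ≤ m) (hle : ∀ t ∈ Icc 0 x, w' t ≤ c * w t * (m - w t)) :
    w x ≤ logistic m c (w 0) x := by
  have hq := mul_exp_le_of_le_deriv (f := fun t => m / w t - 1) (K := -(c * m)) hx
    (fun t ht => hasDerivAt_div_sub_one (hw t ht) (hpos t ht).ne') fun t ht => by
      have hwt := hpos t (Ico_subset_Icc_self ht)
      have hgap : m * (-w' t / w t ^ 2) - -(c * m) * (m / w t - 1) =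
          m * (c * w t * (m - w t) - w' t) / w t ^ 2 := by
        field_simp
        ring
      have := div_nonneg (mul_nonneg hm.le (sub_nonneg.2 (hle t (Ico_subset_Icc_self ht))))
        (sq_nonneg (w t))
      linarith
  have hq0 : 0 ≤ m / w 0 - 1 := by
    rw [sub_nonneg, one_le_div (hpos 0 (left_mem_Icc.2 hx))]
    exact h0
  rw [sub_zero, neg_mul] at hq
  rw [show w x = m / (1 + (m / w x - 1)) by rw [add_sub_cancel, div_div_cancel₀ hm.ne'], logistic]
  exact div_le_div_of_nonneg_left hm.le (by positivity) (by linarith)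

theorem logistic_le_of_le_deriv (hx : 0 ≤ x) (hm : 0 < m)
    (hw : ∀ t ∈ Icc 0 x, HasDerivAt w (w' t) t) (hpos : ∀ t ∈ Icc 0 x, 0 < w t)
    (hle : ∀ t ∈ Icc 0 x, c * w t * (m - w t) ≤ w' t) :
    logistic m c (w 0) x ≤ w x := by
  have hq := le_mul_exp_of_deriv_le (f := fun t => m / w t - 1) (K := -(c * m)) hx
    (fun t ht => hasDerivAt_div_sub_one (hw t ht) (hpos t ht).ne') fun t ht => by
      have hwt := hpos t (Ico_subset_Icc_self ht)
      have hgap : -(c * m) * (m / w t - 1) - m * (-w' t / w t ^ 2) =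
          m * (w' t - c * w t * (m - w t)) / w t ^ 2 := by
        field_simp
        ring
      have := div_nonneg (mul_nonneg hm.le (sub_nonneg.2 (hle t (Ico_subset_Icc_self ht))))
        (sq_nonneg (w t))
      linarith
  have hwx := hpos x (right_mem_Icc.2 hx)
  rw [sub_zero, neg_mul] at hq
  rw [show w x = m / (1 + (m / w x - 1)) by rw [add_sub_cancel, div_div_cancel₀ hm.ne'], logistic]
  exact div_le_div_of_nonneg_left hm.le (by rw [add_sub_cancel]; positivity) (by linarith)

end LogisticComparison

theorem mul_exp_neg_mul_le {κ x : ℝ} (hκ : 0 < κ) : x * exp (-(κ * x)) ≤ 1 / κ := by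
  rw [le_div_iff₀ hκ, exp_neg, ← div_eq_mul_inv, div_mul_eq_mul_div, div_le_one (exp_pos _)]
  linarith [add_one_le_exp (κ * x)]

theorem abs_exp_neg_mul_sub_le {k k' κ x : ℝ} (hκ : 0 < κ) (hk : κ ≤ k) (hk' : κ ≤ k')
    (hx : 0 ≤ x) : |exp (-(k * x)) - exp (-(k' * x))| ≤ |k - k'| / κ := by
  have hderiv : ∀ u ∈ Ici κ, HasDerivWithinAt (fun u => exp (-(u * x)))
      (exp (-(u * x)) * -x) (Ici κ) u := fun u _ =>
    ((hasDerivAt_mul_const x).neg.exp).hasDerivWithinAt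
  have hbound : ∀ u ∈ Ici κ, ‖exp (-(u * x)) * -x‖ ≤ 1 / κ := fun u hu => by
    rw [norm_mul, norm_neg, Real.norm_of_nonneg (exp_pos _).le, Real.norm_of_nonneg hx, mul_comm]
    calc x * exp (-(u * x)) ≤ x * exp (-(κ * x)) := by gcongr; exact hu
      _ ≤ 1 / κ := mul_exp_neg_mul_le hκ
  have := (convex_Ici κ).norm_image_sub_le_of_norm_hasDerivWithin_le hderiv hbound hk' hk
  simpa [div_eq_inv_mul, Real.norm_eq_abs] using this

theorem abs_div_sub_div_le {m m' a a' : ℝ} (ha : 1 ≤ a) (ha' : 1 ≤ a') (hm' : 0 ≤ m') :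
    |m / a - m' / a'| ≤ |m - m'| + m' * |a - a'| := by
  have hsplit : m / a - m' / a' = (m - m') / a + m' * ((a' - a) / (a * a')) := by
    field_simp [(by linarith : a ≠ 0), (by linarith : a' ≠ 0)]
    ring
  rw [hsplit]
  refine (abs_add_le _ _).trans (add_le_add ?_ ?_)
  · rw [abs_div, abs_of_pos (by linarith : 0 < a)]
    exact div_le_self (abs_nonneg _) ha
  · rw [abs_mul, abs_of_nonneg hm', abs_div, abs_sub_comm a', abs_of_pos (by nlinarith : 0 < a * a')]
    gcongr
    exact div_le_self (abs_nonneg _) (by nlinarith)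

theorem abs_logistic_sub_logistic_le {m c w m' c' w' κ x : ℝ} (hx : 0 ≤ x) (hκ : 0 < κ)
    (hk : κ ≤ c * m) (hk' : κ ≤ c' * m') (hw : 0 < w) (hwm : w ≤ m) (hw' : 0 < w')
    (hwm' : w' ≤ m') :
    |logistic m c w x - logistic m' c' w' x| ≤
      |m - m'| + m' * (|m / w - m' / w'| + (m' / w' - 1) * (|c * m - c' * m'| / κ)) := by
  have hA : 0 ≤ m / w - 1 := by rw [sub_nonneg, one_le_div hw]; exact hwm
  have hA' : 0 ≤ m' / w' - 1 := by rw [sub_nonneg, one_le_div hw']; exact hwm'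
  have hE : exp (-(c * m * x)) ≤ 1 := exp_le_one_iff.2 (by nlinarith)
  have hm' : 0 ≤ m' := by linarith
  have hdiv := abs_div_sub_div_le (m := m) (m' := m')
    (le_add_of_nonneg_right (by positivity : 0 ≤ (m / w - 1) * exp (-(c * m * x))))
    (le_add_of_nonneg_right (by positivity : 0 ≤ (m' / w' - 1) * exp (-(c' * m' * x)))) hm'
  rw [add_sub_add_left_eq_sub] at hdiv
  refine hdiv.trans (add_le_add le_rfl (mul_le_mul_of_nonneg_left ?_ hm'))
  have hsplit : (m / w - 1) * exp (-(c * m * x)) - (m' / w' - 1) * exp (-(c' * m' * x)) =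
      (m / w - m' / w') * exp (-(c * m * x)) +
        (m' / w' - 1) * (exp (-(c * m * x)) - exp (-(c' * m' * x))) := by ring
  rw [hsplit]
  refine (abs_add_le _ _).trans (add_le_add ?_ ?_)
  · rw [abs_mul, abs_of_pos (exp_pos _)]
    exact mul_le_of_le_one_right (abs_nonneg _) hE
  · rw [abs_mul, abs_of_nonneg hA']
    exact mul_le_mul_of_nonneg_left (abs_exp_neg_mul_sub_le hκ hk hk' hx) hA'

def LogisticLipschitzOn (K m₁ M c₁ C : ℝ) : Prop :=
  ∀ ⦃x m c w m' c' w' : ℝ⦄, 0 ≤ x → m ∈ Icc m₁ M → c ∈ Icc c₁ C → w ∈ Icc 1 m₁ →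
    m' ∈ Icc m₁ M → c' ∈ Icc c₁ C → w' ∈ Icc 1 m₁ →
    |logistic m c w x - logistic m' c' w' x| ≤ K * (|m - m'| + |c - c'| + |w - w'|)

theorem exists_logisticLipschitzOn {m₁ M c₁ C : ℝ} (hm₁ : 1 ≤ m₁) (hM : m₁ ≤ M)
    (hc₁ : 0 < c₁) (hC : c₁ ≤ C) : ∃ K > 0, LogisticLipschitzOn K m₁ M c₁ C := by
  have hκ : 0 < c₁ * m₁ := by positivity
  have hM0 : 0 ≤ M := by linarith
  have hC0 : 0 ≤ C := by linarith
  refine ⟨1 + M + M ^ 2 + M ^ 2 * (M + C) / (c₁ * m₁), by positivity, ?_⟩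
  rintro x m c w m' c' w' hx ⟨hm, hmM⟩ ⟨hc, hcC⟩ ⟨hw, hwm⟩ ⟨hm', hmM'⟩ ⟨hc', hcC'⟩ ⟨hw', hwm'⟩
  have hquot : |m / w - m' / w'| ≤ |m - m'| + M * |w - w'| :=
    (abs_div_sub_div_le hw hw' (by linarith)).trans (by gcongr)
  have hrate : |c * m - c' * m'| ≤ M * |c - c'| + C * |m - m'| := by
    have hsplit : c * m - c' * m' = m * (c - c') + c' * (m - m') := by ring
    rw [hsplit]
    refine (abs_add_le _ _).trans (add_le_add ?_ ?_) <;> rw [abs_mul, abs_of_pos (by linarith)] <;>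
      gcongr
  have hA' : m' / w' - 1 ≤ M := by linarith [div_le_self (by linarith : 0 ≤ m') hw']
  have hA'0 : 0 ≤ m' / w' - 1 := by rw [sub_nonneg, one_le_div (by linarith)]; linarith
  set Δ := |m - m'| + |c - c'| + |w - w'|
  have hmΔ : |m - m'| ≤ Δ := by simp only [Δ]; linarith [abs_nonneg (c - c'), abs_nonneg (w - w')]
  have hcΔ : |c - c'| ≤ Δ := by simp only [Δ]; linarith [abs_nonneg (m - m'), abs_nonneg (w - w')]
  have hwΔ : |w - w'| ≤ Δ := by simp only [Δ]; linarith [abs_nonneg (c - c'), abs_nonneg (m - m')]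
  calc |logistic m c w x - logistic m' c' w' x|
      ≤ |m - m'| + m' * (|m / w - m' / w'| + (m' / w' - 1) * (|c * m - c' * m'| / (c₁ * m₁))) :=
        abs_logistic_sub_logistic_le hx hκ (mul_le_mul hc hm (by linarith) (by linarith))
          (mul_le_mul hc' hm' (by linarith) (by linarith))
          (by linarith) (hwm.trans hm) (by linarith) (hwm'.trans hm')
    _ ≤ Δ + M * ((Δ + M * Δ) + M * ((M * Δ + C * Δ) / (c₁ * m₁))) := by
        gcongr
        · exact hquot.trans (by gcongr)
        · exact hrate.trans (by gcongr)
    _ = (1 + M + M ^ 2 + M ^ 2 * (M + C) / (c₁ * m₁)) * Δ := by ring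

theorem mul_rpow_one_div_rpow_neg {ε a γ : ℝ} (hε : 0 < ε) :
    ε * (ε ^ (1 / a)) ^ (-γ) = ε ^ (1 - γ / a) := by
  rw [← rpow_mul hε.le]
  nth_rw 1 [← rpow_one ε]
  rw [← rpow_add hε]
  ring_nf

theorem pressure_bounds {γ ε u vp : ℝ} (hγ : 0 < γ) (hε : 0 < ε)
    (hu : 1 + ε ^ (1 / (γ + 1)) ≤ u) (huvp : u ≤ vp) :
    ε * (vp - 1) ^ (-γ) ≤ ε * (u - 1) ^ (-γ) ∧
      ε * (u - 1) ^ (-γ) ≤ ε * (vp - 1) ^ (-γ) + ε ^ (1 / (γ + 1)) := by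
  have hη : 0 < ε ^ (1 / (γ + 1)) := rpow_pos_of_pos hε _
  have hfree : ε * (ε ^ (1 / (γ + 1))) ^ (-γ) = ε ^ (1 / (γ + 1)) := by
    rw [mul_rpow_one_div_rpow_neg hε]
    congr 1
    field_simp
    ring
  refine ⟨mul_le_mul_of_nonneg_left (rpow_le_rpow_of_nonpos (by linarith) (by linarith)
    (by linarith)) hε.le, ?_⟩
  have : ε * (u - 1) ^ (-γ) ≤ ε * (ε ^ (1 / (γ + 1))) ^ (-γ) :=
    mul_le_mul_of_nonneg_left (rpow_le_rpow_of_nonpos hη (by linarith) (by linarith)) hε.le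
  have : 0 ≤ ε * (vp - 1) ^ (-γ) := by
    have : 0 ≤ vp - 1 := by linarith
    positivity
  linarith

theorem tendsto_rpow_nhdsGT_zero {p : ℝ} (hp : 0 < p) :
    Tendsto (fun ε : ℝ => ε ^ p) (𝓝[>] 0) (𝓝 0) := by
  have := (continuousAt_rpow_const 0 p (Or.inr hp.le)).tendsto.mono_left
    (nhdsWithin_le_nhds (s := Ioi 0))
  rwa [zero_rpow hp.ne'] at this

theorem abs_sqrt_sub_sqrt_le {a c : ℝ} (hc : 0 < c) : |√a - √c| ≤ |a - c| / √c := by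
  rw [le_div_iff₀ (sqrt_pos.2 hc)]
  rcases le_total 0 a with ha | ha
  · have hfactor : |a - c| = |√a - √c| * (√a + √c) := by
      rw [← abs_of_nonneg (by positivity : 0 ≤ √a + √c), ← abs_mul]
      congr 1
      nlinarith [sq_sqrt ha, sq_sqrt hc.le]
    rw [hfactor]
    gcongr
    linarith [sqrt_nonneg a]
  · rw [sqrt_eq_zero'.2 ha, zero_sub, abs_neg, abs_of_pos (sqrt_pos.2 hc), mul_self_sqrt hc.le,
      abs_of_nonpos (by linarith)]
    linarith

/-- The wave speed `s_ε` with `b = v₊ - 1`, using `p_ε(v₋^ε) = 1` and `p_ε(v₊) = ε b^{-γ}`. -/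
noncomputable def waveSpeed (γ b ε : ℝ) : ℝ :=
  √((1 - ε * b ^ (-γ)) / (b - ε ^ (1 / γ)))

theorem abs_div_sub_one_div_le {b B e ε η : ℝ} (hb : 0 < b) (hε : 0 < ε) (he : 0 < e)
    (heb : e ≤ b / 2) (heη : e ≤ η) (hεη : ε ≤ η) :
    |(1 - ε * B) / (b - e) - 1 / b| ≤ 2 * (1 + b * |B|) / b ^ 2 * η := by
  have hsplit : (1 - ε * B) / (b - e) - 1 / b = (e - ε * (b * B)) / (b * (b - e)) := by
    field_simp [(by linarith : b - e ≠ 0)]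
    ring
  have hnum : |e - ε * (b * B)| ≤ (1 + b * |B|) * η := by
    calc |e - ε * (b * B)| ≤ |e| + |ε * (b * B)| := abs_sub _ _
      _ = e + ε * (b * |B|) := by
        rw [abs_of_pos he, abs_mul, abs_mul, abs_of_pos hε, abs_of_pos hb]
      _ ≤ (1 + b * |B|) * η := by
        nlinarith [mul_le_mul_of_nonneg_right hεη (mul_nonneg hb.le (abs_nonneg B))]
  have hη : 0 ≤ η := he.le.trans heη
  have hden : b ^ 2 / 2 ≤ b * (b - e) := by nlinarith
  have hden0 : 0 < b * (b - e) := lt_of_lt_of_le (by positivity) hden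
  rw [hsplit, abs_div, abs_of_pos hden0, div_le_iff₀ hden0]
  calc |e - ε * (b * B)| ≤ (1 + b * |B|) * η := hnum
    _ = 2 * (1 + b * |B|) / b ^ 2 * η * (b ^ 2 / 2) := by field_simp
    _ ≤ 2 * (1 + b * |B|) / b ^ 2 * η * (b * (b - e)) := by gcongr

theorem exists_abs_waveSpeed_sub_le {γ b : ℝ} (hγ : 0 < γ) (hb : 0 < b) :
    ∃ D, ∀ᶠ ε in 𝓝[>] 0, |waveSpeed γ b ε - 1 / √b| ≤ D * ε ^ (1 / (γ + 1)) := by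
  refine ⟨2 * (1 + b * |b ^ (-γ)|) / b ^ 2 / √(1 / b), ?_⟩
  filter_upwards [Ioo_mem_nhdsGT one_pos,
    (tendsto_rpow_nhdsGT_zero (one_div_pos.2 hγ)).eventually (ge_mem_nhds (half_pos hb))]
    with ε ⟨hε0, hε1⟩ hsmall
  have heη : ε ^ (1 / γ) ≤ ε ^ (1 / (γ + 1)) := rpow_le_rpow_of_exponent_ge hε0 hε1.le
    (one_div_le_one_div_of_le hγ (by linarith))
  have hεη : ε ≤ ε ^ (1 / (γ + 1)) := by
    have := rpow_le_rpow_of_exponent_ge hε0 hε1.le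
      (show 1 / (γ + 1) ≤ 1 from (div_le_one (by linarith)).2 (by linarith))
    rwa [rpow_one] at this
  rw [waveSpeed, show 1 / √b = √(1 / b) by rw [one_div, one_div, sqrt_inv]]
  calc _ ≤ |(1 - ε * b ^ (-γ)) / (b - ε ^ (1 / γ)) - 1 / b| / √(1 / b) :=
        abs_sqrt_sub_sqrt_le (by positivity)
    _ ≤ 2 * (1 + b * |b ^ (-γ)|) / b ^ 2 * ε ^ (1 / (γ + 1)) / √(1 / b) := by
        gcongr
        exact abs_div_sub_one_div_le hb hε0 (rpow_pos_of_pos hε0 _) hsmall heη hεη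
    _ = _ := by ring

theorem logistic_le_and_le_logistic {v p : ℝ → ℝ} {μ σ m η x : ℝ} (hμ : 0 < μ) (hσ : 0 < σ)
    (hx : 0 ≤ x) (hv : ∀ t, HasDerivAt v (v t / (μ * σ) * (σ ^ 2 * (m - v t) + p m - p (v t))) t)
    (hpos : ∀ t ∈ Icc 0 x, 0 < v t) (hp : ∀ t ∈ Icc 0 x, p m ≤ p (v t) ∧ p (v t) ≤ p m + η)
    (hv0 : v 0 ≤ m - η / σ ^ 2) :
    logistic (m - η / σ ^ 2) (σ / μ) (v 0) x ≤ v x ∧ v x ≤ logistic m (σ / μ) (v 0) x := by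
  have h0 := left_mem_Icc.2 hx
  have hη : 0 ≤ η := by linarith [hp 0 h0]
  have hsplit : ∀ t, v t / (μ * σ) * (σ ^ 2 * (m - v t) + p m - p (v t)) =
      σ / μ * v t * (m - v t) + v t / (μ * σ) * (p m - p (v t)) := fun t => by
    field_simp
    ring
  have hgap : 0 ≤ η / σ ^ 2 := by positivity
  refine ⟨logistic_le_of_le_deriv hx ((hpos 0 h0).trans_le hv0) (fun t _ => hv t) hpos
      fun t ht => ?_,
    le_logistic_of_deriv_le hx (by linarith [hpos 0 h0]) (fun t _ => hv t) hpos (by linarith)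
      fun t ht => ?_⟩
  · have hc : 0 ≤ v t / (μ * σ) := by have := hpos t ht; positivity
    calc σ / μ * v t * (m - η / σ ^ 2 - v t)
        = σ / μ * v t * (m - v t) + v t / (μ * σ) * (-η) := by
          field_simp
          ring
      _ ≤ σ / μ * v t * (m - v t) + v t / (μ * σ) * (p m - p (v t)) := by
          gcongr
          linarith [hp t ht]
      _ = _ := (hsplit t).symm
  · have hc : 0 ≤ v t / (μ * σ) := by have := hpos t ht; positivity
    rw [hsplit]
    linarith [mul_nonpos_of_nonneg_of_nonpos hc (by linarith [hp t ht] : p m - p (v t) ≤ 0)]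

theorem logistic_le_and_le_logistic_of_pressure {v : ℝ → ℝ} {γ μ σ vp ε x : ℝ} (hγ : 0 < γ)
    (hμ : 0 < μ) (hσ : 0 < σ) (hε : 0 < ε) (hx : 0 ≤ x)
    (hv : ∀ t, HasDerivAt v (v t / (μ * σ) *
      (σ ^ 2 * (vp - v t) + ε * (vp - 1) ^ (-γ) - ε * (v t - 1) ^ (-γ))) t)
    (hmono : Monotone v) (hlt : ∀ t, v t < vp) (hv0 : v 0 = 1 + ε ^ (1 / (γ + 1)))
    (hcap : 1 + ε ^ (1 / (γ + 1)) ≤ vp - ε ^ (1 / (γ + 1)) / σ ^ 2) :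
    logistic (vp - ε ^ (1 / (γ + 1)) / σ ^ 2) (σ / μ) (1 + ε ^ (1 / (γ + 1))) x ≤ v x ∧
      v x ≤ logistic vp (σ / μ) (1 + ε ^ (1 / (γ + 1))) x := by
  have hge : ∀ t ∈ Icc 0 x, 1 + ε ^ (1 / (γ + 1)) ≤ v t := fun t ht => hv0 ▸ hmono ht.1
  rw [← hv0]
  refine logistic_le_and_le_logistic (p := fun u => ε * (u - 1) ^ (-γ)) hμ hσ hx hv
    (fun t ht => ?_) (fun t ht => pressure_bounds hγ hε (hge t ht) (hlt t).le) (hv0 ▸ hcap)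
  linarith [hge t ht, rpow_pos_of_pos hε (1 / (γ + 1))]

theorem abs_profile_sub_logistic_le {v : ℝ → ℝ} {γ μ σ s vp ε ρ K x : ℝ} (hγ : 0 < γ)
    (hμ : 0 < μ) (hs : 0 < s) (hε : 0 < ε) (hx : 0 ≤ x) (hK : 0 ≤ K)
    (hlip : LogisticLipschitzOn K ((1 + vp) / 2) vp (s / 2 / μ) (2 * s / μ))
    (hv : ∀ t, HasDerivAt v (v t / (μ * σ) *
      (σ ^ 2 * (vp - v t) + ε * (vp - 1) ^ (-γ) - ε * (v t - 1) ^ (-γ))) t)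
    (hmono : Monotone v) (hlt : ∀ t, v t < vp) (hv0 : v 0 = 1 + ε ^ (1 / (γ + 1)))
    (hσ : |σ - s| ≤ ρ) (hρ : ρ ≤ s / 2) (hη₁ : ε ^ (1 / (γ + 1)) ≤ (vp - 1) / 2)
    (hη₂ : ε ^ (1 / (γ + 1)) ≤ s ^ 2 * (vp - 1) / 8) :
    |v x - logistic vp (s / μ) 1 x| ≤
      K * (4 / s ^ 2 * ε ^ (1 / (γ + 1)) + ρ / μ + ε ^ (1 / (γ + 1))) := by
  set η := ε ^ (1 / (γ + 1))
  have hη0 : 0 < η := rpow_pos_of_pos hε _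
  obtain ⟨hσl, hσu⟩ := abs_le.1 (hσ.trans hρ)
  have hgap : η / σ ^ 2 ≤ 4 / s ^ 2 * η := by
    calc η / σ ^ 2 ≤ η / (s ^ 2 / 4) := by gcongr; nlinarith
      _ = 4 / s ^ 2 * η := by field_simp
  have hgap0 : 0 ≤ η / σ ^ 2 := by positivity
  have hgap' : 4 / s ^ 2 * η ≤ (vp - 1) / 2 := by
    rw [div_mul_eq_mul_div, div_le_iff₀ (by positivity)]
    nlinarith
  have hm : vp - η / σ ^ 2 ∈ Icc ((1 + vp) / 2) vp := ⟨by linarith, by linarith⟩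
  have hw : 1 + η ∈ Icc 1 ((1 + vp) / 2) := ⟨by linarith, by linarith⟩
  have hc : σ / μ ∈ Icc (s / 2 / μ) (2 * s / μ) := ⟨by gcongr; linarith, by gcongr; linarith⟩
  have hc' : s / μ ∈ Icc (s / 2 / μ) (2 * s / μ) := ⟨by gcongr; linarith, by gcongr; linarith⟩
  have hvp' : vp ∈ Icc ((1 + vp) / 2) vp := ⟨by linarith, le_rfl⟩
  have h1 : (1 : ℝ) ∈ Icc 1 ((1 + vp) / 2) := ⟨le_rfl, by linarith⟩
  obtain ⟨hlow, hup⟩ := logistic_le_and_le_logistic_of_pressure (x := x) hγ hμ (by linarith) hε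
    hx hv hmono hlt hv0 (by linarith [hm.1])
  have hupper := hlip hx hvp' hc hw hvp' hc' h1
  have hlower := hlip hx hm hc hw hvp' hc' h1
  have hcdist : |σ / μ - s / μ| ≤ ρ / μ := by
    rw [← sub_div, abs_div, abs_of_pos hμ]
    gcongr
  simp only [sub_self, abs_zero, zero_add, add_sub_cancel_left, sub_sub_cancel_left, abs_neg,
    abs_of_pos hη0, abs_of_nonneg hgap0] at hupper hlower
  have := mul_le_mul_of_nonneg_left
    (by linarith : |σ / μ - s / μ| + η ≤ η / σ ^ 2 + |σ / μ - s / μ| + η) hK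
  have := mul_le_mul_of_nonneg_left
    (by linarith : η / σ ^ 2 + |σ / μ - s / μ| + η ≤ 4 / s ^ 2 * η + ρ / μ + η) hK
  rw [abs_le] at hupper hlower ⊢
  constructor <;> linarith

theorem exists_abs_profile_sub_logistic_le {v : ℝ → ℝ → ℝ} {σ : ℝ → ℝ} {γ μ s vp : ℝ}
    (hγ : 0 < γ) (hμ : 0 < μ) (hs : 0 < s) (hvp : 1 < vp)
    (hv : ∀ᶠ ε in 𝓝[>] 0, ∀ t, HasDerivAt (v ε) (v ε t / (μ * σ ε) *
      (σ ε ^ 2 * (vp - v ε t) + ε * (vp - 1) ^ (-γ) - ε * (v ε t - 1) ^ (-γ))) t)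
    (hmono : ∀ᶠ ε in 𝓝[>] 0, Monotone (v ε)) (hlt : ∀ᶠ ε in 𝓝[>] 0, ∀ t, v ε t < vp)
    (hv0 : ∀ᶠ ε in 𝓝[>] 0, v ε 0 = 1 + ε ^ (1 / (γ + 1)))
    (hσ : ∃ D, ∀ᶠ ε in 𝓝[>] 0, |σ ε - s| ≤ D * ε ^ (1 / (γ + 1))) :
    ∃ C > 0, ∀ᶠ ε in 𝓝[>] 0, ∀ x ≥ 0,
      |v ε x - logistic vp (s / μ) 1 x| ≤ C * ε ^ (1 / (γ + 1)) := by
  obtain ⟨D, hD⟩ := hσ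
  obtain ⟨K, hK, hlip⟩ := exists_logisticLipschitzOn (m₁ := (1 + vp) / 2) (M := vp)
    (c₁ := s / 2 / μ) (C := 2 * s / μ) (by linarith) (by linarith) (by positivity)
    (by gcongr; linarith)
  refine ⟨K * (4 / s ^ 2 + |D| / μ + 1), by positivity, ?_⟩
  have hη := tendsto_rpow_nhdsGT_zero (p := 1 / (γ + 1)) (by positivity)
  have hvp1 : 0 < vp - 1 := by linarith
  filter_upwards [hv, hmono, hlt, hv0, hD, self_mem_nhdsWithin,
    hη.eventually (ge_mem_nhds (by positivity : (0 : ℝ) < (vp - 1) / 2)),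
    hη.eventually (ge_mem_nhds (by positivity : (0 : ℝ) < s ^ 2 * (vp - 1) / 8)),
    (hη.const_mul |D|).eventually (ge_mem_nhds (by rw [mul_zero]; positivity : |D| * 0 < s / 2))]
    with ε hvε hmonoε hltε hv0ε hDε (hε : 0 < ε) hη₁ hη₂ hη₃ x hx
  calc |v ε x - logistic vp (s / μ) 1 x|
      ≤ K * (4 / s ^ 2 * ε ^ (1 / (γ + 1)) + |D| * ε ^ (1 / (γ + 1)) / μ + ε ^ (1 / (γ + 1))) :=
        abs_profile_sub_logistic_le hγ hμ hs hε hx hK.le hlip hvε hmonoε hltε hv0ε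
          (hDε.trans (by gcongr; exact le_abs_self D)) hη₃ hη₁ hη₂
    _ = K * (4 / s ^ 2 + |D| / μ + 1) * ε ^ (1 / (γ + 1)) := by ring

theorem stmt11_general (γ μ vp : ℝ) (hγ : 1 ≤ γ) (hμ : 0 < μ) (hvp : 2 < vp)
    (pe : ℝ → ℝ → ℝ) (hpe : ∀ ε v : ℝ, pe ε v = ε * (v - 1) ^ (-γ))
    (vm : ℝ → ℝ) (hvm : ∀ ε : ℝ, vm ε = 1 + ε ^ (1 / γ))
    (se : ℝ → ℝ) (hse : ∀ ε : ℝ, se ε = Real.sqrt ((pe ε (vm ε) - pe ε vp) / (vp - vm ε)))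
    (Φ : ℝ → ℝ → ℝ) (hΦ : ∀ ε v : ℝ, Φ ε v = (se ε) ^ 2 * (vp - v) + pe ε vp - pe ε v)
    (ε₀ : ℝ) (hε₀ : 0 < ε₀)
    (vb : ℝ → ℝ → ℝ)
    (hrange : ∀ ε ∈ Ioo (0 : ℝ) ε₀, ∀ x : ℝ, vb ε x ∈ Ioo (vm ε) vp)
    (hode : ∀ ε ∈ Ioo (0 : ℝ) ε₀, ∀ x : ℝ,
      HasDerivAt (vb ε) (vb ε x / (μ * se ε) * Φ ε (vb ε x)) x)
    (hmono : ∀ ε ∈ Ioo (0 : ℝ) ε₀, StrictMono (vb ε))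
    (hnorm : ∀ ε ∈ Ioo (0 : ℝ) ε₀, vb ε 0 = 1 + ε ^ (1 / (γ + 1)))
    (s : ℝ) (hs : s = 1 / Real.sqrt (vp - 1))
    (vlim : ℝ → ℝ)
    (hvlim : ∀ x : ℝ,
      vlim x = if x ≤ 0 then 1 else vp / (1 + (vp - 1) * Real.exp (-s * vp * x / μ))) :
    ∃ C > (0 : ℝ), ∃ ε₁ > (0 : ℝ), ε₁ ≤ ε₀ ∧
      ∀ ε ∈ Ioo (0 : ℝ) ε₁, ∀ x ≥ (0 : ℝ),
        |vb ε x - vlim x| ≤ C * ε ^ (1 / (γ + 1)) := by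
  have hγ0 : 0 < γ := by linarith
  have hb : 0 < vp - 1 := by linarith
  have hspeed : ∀ ε > 0, se ε = waveSpeed γ (vp - 1) ε := fun ε hε => by
    rw [hse, hpe, hpe, hvm, add_sub_cancel_left, mul_rpow_one_div_rpow_neg hε,
      div_self hγ0.ne', sub_self, rpow_zero, waveSpeed, sub_add_eq_sub_sub]
  have hlim : ∀ x ≥ 0, vlim x = logistic vp (s / μ) 1 x := fun x hx => by
    rw [hvlim]
    split_ifs with h
    · rw [le_antisymm h hx, logistic_zero (by linarith)]
    · rw [logistic, div_one]
      ring_nf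
  have hsmall : ∀ᶠ ε in 𝓝[>] (0 : ℝ), ε ∈ Ioo 0 ε₀ := Ioo_mem_nhdsGT hε₀
  obtain ⟨C, hC, hev⟩ := exists_abs_profile_sub_logistic_le (v := vb) (σ := se) (s := s) hγ0 hμ
    (by rw [hs]; positivity) (by linarith)
    (hsmall.mono fun ε hε t => by simpa only [hΦ, hpe] using hode ε hε t)
    (hsmall.mono fun ε hε => (hmono ε hε).monotone)
    (hsmall.mono fun ε hε t => (hrange ε hε t).2) (hsmall.mono hnorm)
    (by
      obtain ⟨D, hD⟩ := exists_abs_waveSpeed_sub_le hγ0 hb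
      exact ⟨D, by filter_upwards [hD, self_mem_nhdsWithin] with ε h hε; rwa [hspeed ε hε, hs]⟩)
  obtain ⟨ε₁, hε₁, hε₁'⟩ := (nhdsGT_basis 0).eventually_iff.1 hev
  refine ⟨C, hC, min ε₀ ε₁, lt_min hε₀ hε₁, min_le_left _ _, fun ε hε x hx => ?_⟩
  rw [hlim x hx]
  exact hε₁' ⟨hε.1, hε.2.trans_le (min_le_right _ _)⟩ x hx

/-- In the free zone `x ≥ 0`, the error between the normalized soft-congestion profile
`v̄_ε` and the limit profile `v̄` is of order `ε^{1/(γ+1)}`, uniformly in `x ≥ 0`. -/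
theorem stmt11 (γ μ vp : ℝ) (hγ : 1 ≤ γ) (hμ : 0 < μ) (hvp : 2 < vp)
    (pe : ℝ → ℝ → ℝ) (hpe : ∀ ε v : ℝ, pe ε v = ε * (v - 1) ^ (-γ))
    (vm : ℝ → ℝ) (hvm : ∀ ε : ℝ, vm ε = 1 + ε ^ (1 / γ))
    (se : ℝ → ℝ) (hse : ∀ ε : ℝ, se ε = Real.sqrt ((pe ε (vm ε) - pe ε vp) / (vp - vm ε)))
    (Φ : ℝ → ℝ → ℝ) (hΦ : ∀ ε v : ℝ, Φ ε v = (se ε) ^ 2 * (vp - v) + pe ε vp - pe ε v)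
    (ε₀ : ℝ) (hε₀ : 0 < ε₀)
    (vb : ℝ → ℝ → ℝ)
    (hrange : ∀ ε ∈ Ioo (0 : ℝ) ε₀, ∀ x : ℝ, vb ε x ∈ Ioo (vm ε) vp)
    (hode : ∀ ε ∈ Ioo (0 : ℝ) ε₀, ∀ x : ℝ,
      HasDerivAt (vb ε) (vb ε x / (μ * se ε) * Φ ε (vb ε x)) x)
    (hmono : ∀ ε ∈ Ioo (0 : ℝ) ε₀, StrictMono (vb ε))
    (hlim_bot : ∀ ε ∈ Ioo (0 : ℝ) ε₀, Tendsto (vb ε) atBot (nhds (vm ε)))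
    (hlim_top : ∀ ε ∈ Ioo (0 : ℝ) ε₀, Tendsto (vb ε) atTop (nhds vp))
    (hnorm : ∀ ε ∈ Ioo (0 : ℝ) ε₀, vb ε 0 = 1 + ε ^ (1 / (γ + 1)))
    (s : ℝ) (hs : s = 1 / Real.sqrt (vp - 1))
    (vlim : ℝ → ℝ)
    (hvlim : ∀ x : ℝ,
      vlim x = if x ≤ 0 then 1 else vp / (1 + (vp - 1) * Real.exp (-s * vp * x / μ))) :
    ∃ C > (0 : ℝ), ∃ ε₁ > (0 : ℝ), ε₁ ≤ ε₀ ∧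
      ∀ ε ∈ Ioo (0 : ℝ) ε₁, ∀ x ≥ (0 : ℝ),
        |vb ε x - vlim x| ≤ C * ε ^ (1 / (γ + 1)) :=
  stmt11_general γ μ vp hγ hμ hvp pe hpe vm hvm se hse Φ hΦ ε₀ hε₀ vb hrange hode hmono hnorm s hs
    vlim hvlim
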